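/- The map Ξ sending the monomial x_1^{α_1}⋯x_n^{α_n} to the sequence of partial sums (α_1, α_1+α_2, …, α_1+⋯+α_n, α_1+⋯+α_n, …) is an order isomorphism from the poset (M, A_{·,·}) onto the set of weakly increasing, eventually constant functions ℕ⁺ → ℕ ordered by pointwise comparison. In particular (M, A_{·,·}) is a distributive lattice. -/

import Mathlib

/-- The free abelian monoid `M` on variables `x₁, x₂, …`, identified with
finitely supported exponent vectors; index `i : ℕ` represents the variable `x_{i+1}`. -/
abbrev Mon : Type := ℕ →₀ ℕ

/-- Total degree of a monomial. -/
def deg (m : Mon) : ℕ := m.sum fun _ v => v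

/-- `m` is a monomial in the first `n` variables, i.e. `m ∈ Mⁿ`. -/
def InVars (n : ℕ) (m : Mon) : Prop := ∀ i ∈ m.support, i < n

/-- Elementary move: `m = (x_i / x_j) · m'` for some `i < j` with `x_j ∣ m'`. -/
def ElemMove (m m' : Mon) : Prop :=
  ∃ i j : ℕ, i < j ∧ m + Finsupp.single j 1 = m' + Finsupp.single i 1

/-- Stable move: `m = (x_i / x_s) · m'` where `s = maxsupp m'` and `i < s`. -/
def StableMove (m m' : Mon) : Prop :=
  ∃ s i : ℕ, i < s ∧ m' s ≠ 0 ∧ (∀ t, s < t → m' t = 0) ∧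
    m + Finsupp.single s 1 = m' + Finsupp.single i 1

/-- The divisibility relation `D`: `(m, m') ∈ D` iff `m'` divides `m`. -/
def Dvd' (m m' : Mon) : Prop := ∃ t : Mon, m = m' + t

/-- The strongly stable partial order `A_{n,d}` on monomials of degree `d`
in the first `n` variables: reflexive–transitive closure of elementary moves
within `M_d^n`. -/
def Asub (n d : ℕ) (m m' : Mon) : Prop :=
  Relation.ReflTransGen
    (fun a b => InVars n a ∧ InVars n b ∧ deg a = d ∧ deg b = d ∧ ElemMove a b) m m'

/-- `A_{·,·} = rtr(D ∪ ⋃_{n,d} A_{n,d})`. -/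
def Aall : Mon → Mon → Prop :=
  Relation.ReflTransGen (fun a b => Dvd' a b ∨ ∃ n d, Asub n d a b)

/-- The map `Ξ` sending `x₁^{α₁} ⋯ x_n^{α_n}` to its sequence of partial sums
`(α₁, α₁+α₂, …)`; position `k` holds `α₁ + ⋯ + α_{k+1}`. -/
def Xi (m : Mon) : ℕ → ℕ := fun k => ∑ i ∈ Finset.range (k + 1), m i

/-!
`Ξ` is additive, and an elementary move `x_j ↦ x_i` (`i < j`) lowers the partial sums by one
exactly on `[i, j)`, while divisibility lowers them by the partial sums of the cofactor; so every
generator of `A_{·,·}` decreases `Ξ` pointwise. Conversely, if `Ξ b ≤ Ξ a`, first multiply `b` by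
a power of a variable beyond both supports to reach `c` with `Ξ c ≤ Ξ a` and equal degrees. Then,
with `i` the first index where `a` and `c` differ and `j > i` the first index where the partial
sums meet again, the move replacing `x_i` by `x_j` in `a` keeps `Ξ c ≤ Ξ a` and strictly shrinks
`∑ (Ξ a - Ξ c)`. The range of `Ξ` is closed under pointwise `max` and `min`, so the lattice
structure is transported from a sublattice of `ℕ → ℕ`.
-/

open Finset

lemma Xi_add (a b : Mon) (k : ℕ) : Xi (a + b) k = Xi a k + Xi b k := by
  simp [Xi, sum_add_distrib]

lemma Xi_single (j c k : ℕ) : Xi (Finsupp.single j c) k = if j ≤ k then c else 0 := by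
  simp [Xi, Finsupp.single_apply]

lemma Xi_zero (m : Mon) : Xi m 0 = m 0 := by
  simp [Xi]

lemma Xi_succ (m : Mon) (k : ℕ) : Xi m (k + 1) = Xi m k + m (k + 1) :=
  sum_range_succ _ _

lemma monotone_Xi (m : Mon) : Monotone (Xi m) := fun _ _ h =>
  sum_le_sum_of_subset (range_subset_range.mpr (Nat.succ_le_succ h))

lemma Xi_injective : Function.Injective Xi := by
  intro a b h
  ext i
  cases i with
  | zero => simpa only [Xi_zero] using congrFun h 0
  | succ k =>
    have := congrFun h (k + 1)
    rw [Xi_succ, Xi_succ, congrFun h k] at this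
    omega

lemma deg_add (a b : Mon) : deg (a + b) = deg a + deg b :=
  Finsupp.sum_add_index' (fun _ => rfl) fun _ _ _ => rfl

lemma deg_single (j c : ℕ) : deg (Finsupp.single j c) = c :=
  Finsupp.sum_single_index rfl

lemma InVars.mono {n k : ℕ} {m : Mon} (h : InVars n m) (hnk : n ≤ k) : InVars k m :=
  fun i hi => (h i hi).trans_le hnk

lemma exists_inVars (m : Mon) : ∃ n, InVars n m := by
  obtain ⟨n, hn⟩ := m.support.exists_nat_subset_range
  exact ⟨n, fun i hi => mem_range.mp (hn hi)⟩

lemma exists_inVars₂ (a b : Mon) : ∃ n, InVars n a ∧ InVars n b := by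
  obtain ⟨na, ha⟩ := exists_inVars a
  obtain ⟨nb, hb⟩ := exists_inVars b
  exact ⟨max na nb, ha.mono (le_max_left ..), hb.mono (le_max_right ..)⟩

lemma Xi_eq_of_inVars {n k : ℕ} {m : Mon} (h : InVars n m) (hk : n ≤ k) : Xi m k = Xi m n := by
  refine (sum_subset (range_subset_range.mpr (by omega)) fun i _ hi => ?_).symm
  by_contra hmi
  have := h i (Finsupp.mem_support_iff.mpr hmi)
  simp only [mem_range] at hi
  omega

lemma exists_Xi_eq {g : ℕ → ℕ} (hg : Monotone g) {N : ℕ} (hN : ∀ k, N ≤ k → g k = g N) :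
    ∃ m, Xi m = g := by
  let δ : ℕ → ℕ := fun
    | 0 => g 0
    | k + 1 => g (k + 1) - g k
  have hδ : ∀ i, δ i ≠ 0 → i ∈ range (N + 1) := by
    rintro (_ | k) hk
    · simp
    · have := hN k
      have := hN (k + 1)
      rw [mem_range]
      by_contra
      simp only [δ] at hk
      omega
  refine ⟨Finsupp.onFinset _ δ hδ, funext fun k => ?_⟩
  induction k with
  | zero => simp [Xi_zero, δ]
  | succ k ih =>
    have : g k ≤ g (k + 1) := hg (by omega)
    rw [Xi_succ, ih, Finsupp.onFinset_apply]
    simp only [δ]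
    omega

def monotoneEventuallyConst : Sublattice (ℕ → ℕ) where
  carrier := {g | Monotone g ∧ ∃ N, ∀ k, N ≤ k → g k = g N}
  supClosed' := by
    rintro f ⟨hf, M, hM⟩ g ⟨hg, N, hN⟩
    refine ⟨hf.sup hg, max M N, fun k hk => ?_⟩
    simp only [Pi.sup_apply, hM k (le_of_max_le_left hk), hN k (le_of_max_le_right hk),
      hM _ (le_max_left M N), hN _ (le_max_right M N)]
  infClosed' := by
    rintro f ⟨hf, M, hM⟩ g ⟨hg, N, hN⟩
    refine ⟨hf.inf hg, max M N, fun k hk => ?_⟩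
    simp only [Pi.inf_apply, hM k (le_of_max_le_left hk), hN k (le_of_max_le_right hk),
      hM _ (le_max_left M N), hN _ (le_max_right M N)]

lemma range_Xi : Set.range Xi = monotoneEventuallyConst := by
  ext g
  constructor
  · rintro ⟨m, rfl⟩
    obtain ⟨N, hN⟩ := exists_inVars m
    exact ⟨monotone_Xi m, N, fun k => Xi_eq_of_inVars hN⟩
  · rintro ⟨hg, N, hN⟩
    exact exists_Xi_eq hg hN

lemma Xi_add_single_eq {a a' : Mon} {i j : ℕ}
    (h : a + Finsupp.single j 1 = a' + Finsupp.single i 1) (k : ℕ) :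
    Xi a k + (if j ≤ k then 1 else 0) = Xi a' k + (if i ≤ k then 1 else 0) := by
  simpa only [Xi_add, Xi_single] using congrArg (Xi · k) h

lemma ElemMove.Xi_le {a a' : Mon} (h : ElemMove a a') (k : ℕ) : Xi a' k ≤ Xi a k := by
  obtain ⟨i, j, hij, h⟩ := h
  have := Xi_add_single_eq h k
  split_ifs at this <;> omega

lemma Dvd'.Xi_le {a b : Mon} (h : Dvd' a b) (k : ℕ) : Xi b k ≤ Xi a k := by
  obtain ⟨t, rfl⟩ := h
  rw [Xi_add]
  omega

lemma Asub.Xi_le {n d : ℕ} {a b : Mon} (h : Asub n d a b) (k : ℕ) : Xi b k ≤ Xi a k := by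
  induction h with
  | refl => exact le_rfl
  | tail _ hstep ih => exact (hstep.2.2.2.2.Xi_le k).trans ih

lemma Aall.Xi_le {a b : Mon} (h : Aall a b) (k : ℕ) : Xi b k ≤ Xi a k := by
  induction h with
  | refl => exact le_rfl
  | tail _ hstep ih =>
    exact (hstep.elim (Dvd'.Xi_le · k) fun ⟨_, _, h⟩ => h.Xi_le k).trans ih

lemma ElemMove.aall {a b : Mon} (h : ElemMove a b) : Aall a b := by
  obtain ⟨n, ha, hb⟩ := exists_inVars₂ a b
  have ⟨i, j, _, heq⟩ := h
  have hdeg : deg b = deg a := by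
    have := congrArg deg heq
    rw [deg_add, deg_add, deg_single, deg_single] at this
    omega
  exact .single <| .inr ⟨n, deg a, .single ⟨ha, hb, rfl, hdeg, h⟩⟩

lemma exists_elemMove_toward {a c : Mon} (hle : ∀ k, Xi c k ≤ Xi a k) (hne : a ≠ c) {N : ℕ}
    (hN : ∀ k, N ≤ k → Xi a k = Xi c k) :
    ∃ a', ElemMove a a' ∧ (∀ k, Xi c k ≤ Xi a' k) ∧ ∃ i < N, Xi a' i < Xi a i := by
  have hdiff : ∃ i, a i ≠ c i := DFunLike.ne_iff.mp hne
  obtain ⟨i, hi, hprefix⟩ : ∃ i, a i ≠ c i ∧ ∑ t ∈ range i, a t = ∑ t ∈ range i, c t :=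
    ⟨_, Nat.find_spec hdiff,
      sum_congr rfl fun t ht => not_not.mp (Nat.find_min hdiff (mem_range.mp ht))⟩
  have hci : c i < a i := by
    have := hle i
    simp only [Xi, sum_range_succ, hprefix] at this
    omega
  have hXi : Xi c i < Xi a i := by
    simp only [Xi, sum_range_succ, hprefix]
    omega
  have hiN : i < N := by
    by_contra! h
    exact hXi.ne' (hN i h)
  have hmeet : ∃ j, i < j ∧ Xi a j = Xi c j := ⟨N, hiN, hN N le_rfl⟩
  obtain ⟨j, hij, hgap⟩ : ∃ j, i < j ∧ ∀ t, i ≤ t → t < j → Xi c t < Xi a t := by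
    refine ⟨_, (Nat.find_spec hmeet).1, fun t hit htj => ?_⟩
    rcases hit.eq_or_lt with rfl | hit
    · exact hXi
    · exact (hle t).lt_of_ne fun h => Nat.find_min hmeet htj ⟨hit, h.symm⟩
  have hdvd : Finsupp.single i 1 ≤ a + Finsupp.single j 1 :=
    le_trans (Finsupp.single_le_iff.mpr (by omega)) le_self_add
  set a' := a + Finsupp.single j 1 - Finsupp.single i 1
  have hmove : a + Finsupp.single j 1 = a' + Finsupp.single i 1 := (tsub_add_cancel_of_le hdvd).symm
  refine ⟨a', ⟨i, j, hij, hmove⟩, fun k => ?_, i, hiN, ?_⟩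
  · have hk := Xi_add_single_eq hmove k
    have := hle k
    rcases lt_or_ge k i with hki | hik
    · split_ifs at hk <;> omega
    rcases lt_or_ge k j with hkj | hjk
    · have := hgap k hik hkj
      split_ifs at hk <;> omega
    · split_ifs at hk <;> omega
  · have := Xi_add_single_eq hmove i
    rw [if_pos le_rfl, if_neg (by omega)] at this
    omega

lemma aall_of_Xi_le_of_eventually_eq {N : ℕ} {a c : Mon} (hle : ∀ k, Xi c k ≤ Xi a k)
    (hN : ∀ k, N ≤ k → Xi a k = Xi c k) : Aall a c := by
  induction hgap : ∑ k ∈ range N, (Xi a k - Xi c k) using Nat.strong_induction_on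
    generalizing a with
  | _ gap ih =>
  by_cases hac : a = c
  · exact hac ▸ .refl
  obtain ⟨a', hmove, hle', i, hiN, hlt⟩ := exists_elemMove_toward hle hac hN
  have ha' := hmove.Xi_le
  have hN' : ∀ k, N ≤ k → Xi a' k = Xi c k := fun k hk =>
    le_antisymm ((ha' k).trans (hN k hk).le) (hle' k)
  refine hmove.aall.trans (ih _ ?_ hle' hN' rfl)
  rw [← hgap]
  exact sum_lt_sum (fun k _ => by have := ha' k; omega)
    ⟨i, mem_range.mpr hiN, by have := hle' i; omega⟩

lemma aall_of_Xi_le {a b : Mon} (hle : ∀ k, Xi b k ≤ Xi a k) : Aall a b := by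
  obtain ⟨N, ha, hb⟩ := exists_inVars₂ a b
  have hXa : ∀ k, N ≤ k → Xi a k = Xi a N := fun k => Xi_eq_of_inVars ha
  have hXb : ∀ k, N ≤ k → Xi b k = Xi b N := fun k => Xi_eq_of_inVars hb
  have hbN := hle N
  -- the partial sums of `c` are those of `b` below `N` and those of `a` from `N` on
  let c := b + Finsupp.single N (Xi a N - Xi b N)
  have hXc : ∀ k, Xi c k = Xi b k + if N ≤ k then Xi a N - Xi b N else 0 := fun k => by
    rw [Xi_add, Xi_single]
  have hca : ∀ k, Xi c k ≤ Xi a k := fun k => by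
    rw [hXc]
    split_ifs with hk
    · rw [hXa k hk, hXb k hk]
      omega
    · simpa using hle k
  have hN : ∀ k, N ≤ k → Xi a k = Xi c k := fun k hk => by
    rw [hXc, if_pos hk, hXa k hk, hXb k hk]
    omega
  exact (aall_of_Xi_le_of_eventually_eq hca hN).tail (.inl ⟨_, rfl⟩)

lemma aall_iff_Xi_le (a b : Mon) : Aall a b ↔ ∀ k, Xi b k ≤ Xi a k :=
  ⟨Aall.Xi_le, aall_of_Xi_le⟩

noncomputable def xiEquiv : Mon ≃ monotoneEventuallyConst :=
  (Equiv.ofInjective Xi Xi_injective).trans (Equiv.setCongr range_Xi)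

/-- `Ξ` is an order isomorphism from `(M, A_{·,·})` onto the set
of weakly increasing, eventually constant functions `ℕ → ℕ`, ordered pointwise.
In particular `(M, A_{·,·})` is a distributive lattice. -/
theorem stmt7 :
    Function.Injective Xi ∧
    Set.range Xi = {g : ℕ → ℕ | Monotone g ∧ ∃ N, ∀ k, N ≤ k → g k = g N} ∧
    (∀ a b : Mon, Aall a b ↔ ∀ k, Xi b k ≤ Xi a k) ∧
    (∃ inst : DistribLattice Mon, ∀ a b : Mon, inst.le a b ↔ Aall b a) :=
  ⟨Xi_injective, range_Xi, aall_iff_Xi_le, xiEquiv.distribLattice,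
    fun a b => (aall_iff_Xi_le b a).symm⟩
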